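/- For every n and every K ⊆ [2, n+1], with τ(i) = n+3−i, the following identity holds: Σ_{J ⊆ [2,n+1]∖K} (−1)^{n−|K∪J|} α(τ(J))!̂ = Σ_{J ⊆ K} (−1)^{|K∖J|} α(J)!̂. -/

import Mathlib

open Finset

/-- Positions of descents of a permutation of `Fin (n+1)` in one-line notation. -/
def descSet (n : ℕ) (σ : Equiv.Perm (Fin (n+1))) : Finset (Fin n) :=
  Finset.univ.filter (fun i : Fin n => σ i.succ < σ i.castSucc)

/-- Number of descents. -/
def des (n : ℕ) (σ : Equiv.Perm (Fin (n+1))) : ℕ := (descSet n σ).card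

/-- Descent top set, with values written 1-based (so `DT n σ ⊆ [2, n+1]`). -/
def DT (n : ℕ) (σ : Equiv.Perm (Fin (n+1))) : Finset ℕ :=
  (descSet n σ).image (fun i => (σ i.castSucc : ℕ) + 1)

/-- `β!̂ = (k+1)^{β₁} k^{β₂} ⋯ 2^{β_k}` for a tuple `β` of length `k`. -/
def hatFac (β : List ℕ) : ℕ :=
  (β.zipIdx.map (fun p => (β.length + 1 - p.2) ^ p.1)).prod

/-- `α(X)!̂` where, for `X = {x₁ < … < x_k}`, `α(X) = (x₁ - 1, x₂ - x₁, …, x_k - x_{k-1})`. -/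
def alphaHat (X : Finset ℕ) : ℕ :=
  hatFac (List.zipWith (fun a b => b - a) (1 :: X.sort (· ≤ ·)) (X.sort (· ≤ ·)))

/-!
Let `𝒟 K = ∑_{J ⊆ K} (-1)^{|K \ J|} α(J)!̂` be the Möbius inversion of `α(·)!̂`; the claim is
`𝒟 (τ([2, n+1] \ K)) = 𝒟 K`; we induct on `n`, writing `K \ {2} = K' + 1` with `K' ⊆ [2, n]`.
Splitting off the first entry of `α` gives `α(X + 1)!̂ = (|X| + 1) α(X)!̂` and
`α({2} ∪ (X + 1))!̂ = (|X| + 2) α(X)!̂`. Hence if `2 ∈ K` then `𝒟 K = 𝒟 K'`, and the mirrored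
set is the same for `K` and `K'`. If `2 ∉ K` then `𝒟 K = (|K'| + 1) 𝒟 K' + ∑_{s ∈ K'} 𝒟 (K' \ {s})`,
while the mirrored set is `P ∪ {n + 1}` with `P` the mirrored set of `K'`. The recursion
`α(X ∪ {N + 1})!̂ = 2 α(X)!̂ + ∑_{x ∈ [2, N]} α(X ∪ {x})!̂` gives
`𝒟 (P ∪ {N + 1}) = (N - |P|) 𝒟 P + ∑_{m ∈ [2, N] \ P} 𝒟 (P ∪ {m})`, and by induction the two
expansions agree term by term, `K' \ {s}` corresponding to `P ∪ {τ s}`.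
-/

section Mobius

variable {ι : Type*} [DecidableEq ι]

def mobius (g : Finset ι → ℤ) (K : Finset ι) : ℤ :=
  ∑ J ∈ K.powerset, (-1) ^ (K \ J).card * g J

theorem mobius_add (f g : Finset ι → ℤ) (K : Finset ι) :
    mobius (fun J ↦ f J + g J) K = mobius f K + mobius g K := by
  simp only [mobius, mul_add, sum_add_distrib]

theorem mobius_sub (f g : Finset ι → ℤ) (K : Finset ι) :
    mobius (fun J ↦ f J - g J) K = mobius f K - mobius g K := by
  simp only [mobius, mul_sub, sum_sub_distrib]

theorem mobius_const_mul (c : ℤ) (g : Finset ι → ℤ) (K : Finset ι) :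
    mobius (fun J ↦ c * g J) K = c * mobius g K := by
  simp only [mobius, mul_sum, mul_left_comm]

theorem mobius_sum {κ : Type*} (s : Finset κ) (g : κ → Finset ι → ℤ) (K : Finset ι) :
    mobius (fun J ↦ ∑ i ∈ s, g i J) K = ∑ i ∈ s, mobius (g i) K := by
  simp only [mobius, mul_sum]
  exact sum_comm

theorem mobius_congr {f g : Finset ι → ℤ} {K : Finset ι} (h : ∀ J ⊆ K, f J = g J) :
    mobius f K = mobius g K :=
  sum_congr rfl fun J hJ ↦ by rw [h J (mem_powerset.mp hJ)]

theorem mobius_image {κ : Type*} [DecidableEq κ] {f : ι → κ} {K : Finset ι}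
    (hf : Set.InjOn f K) (g : Finset κ → ℤ) :
    mobius g (K.image f) = mobius (fun J ↦ g (J.image f)) K := by
  rw [mobius, powerset_image, sum_image]
  · refine sum_congr rfl fun J hJ ↦ ?_
    rw [← image_sdiff_of_injOn hf (mem_powerset.mp hJ), card_image_of_injOn]
    exact hf.mono (by simp)
  · exact image_injOn_powerset_of_injOn hf

theorem mobius_insert {x : ι} {P : Finset ι} (hx : x ∉ P) (g : Finset ι → ℤ) :
    mobius g (insert x P) = mobius (fun T ↦ g (insert x T)) P - mobius g P := by
  rw [mobius, sum_powerset_insert hx, add_comm, mobius, mobius, sub_eq_add_neg, ← sum_neg_distrib]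
  congr 1
  · refine sum_congr rfl fun T _ ↦ ?_
    rw [insert_sdiff_insert, sdiff_insert_of_notMem hx]
  · refine sum_congr rfl fun T hT ↦ ?_
    have hxT : x ∉ T := notMem_mono (mem_powerset.mp hT) hx
    rw [insert_sdiff_of_notMem _ hxT, card_insert_of_notMem (by simp [hx]), pow_succ]
    ring

theorem mobius_comp_insert_of_mem {x : ι} {P : Finset ι} (hx : x ∈ P) (g : Finset ι → ℤ) :
    mobius (fun T ↦ g (insert x T)) P = 0 := by
  rw [← insert_erase hx, mobius_insert (notMem_erase x P)]
  simp only [insert_idem, sub_self]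

theorem sum_powerset_sum_eq_sum_sum_powerset_erase {M : Type*} [AddCommMonoid M] (K : Finset ι)
    (F : ι → Finset ι → M) :
    ∑ T ∈ K.powerset, ∑ s ∈ T, F s T = ∑ s ∈ K, ∑ T ∈ (K.erase s).powerset, F s (insert s T) := by
  have hT : ∀ T ∈ K.powerset, ∑ s ∈ T, F s T = ∑ s ∈ K, if s ∈ T then F s T else 0 := by
    intro T hT
    rw [← sum_filter, filter_mem_eq_inter, inter_eq_right.mpr (mem_powerset.mp hT)]
  rw [sum_congr rfl hT, sum_comm]
  refine sum_congr rfl fun s hs ↦ ?_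
  conv_lhs => rw [← insert_erase hs]
  rw [sum_powerset_insert (notMem_erase s K), sum_eq_zero, zero_add]
  · simp only [mem_insert_self, if_true]
  · exact fun T hT ↦ if_neg (notMem_mono (mem_powerset.mp hT) (notMem_erase s K))

theorem mobius_card_mul (g : Finset ι → ℤ) (K : Finset ι) :
    mobius (fun T ↦ T.card * g T) K = K.card * mobius g K + ∑ s ∈ K, mobius g (K.erase s) := by
  have h : ∀ s ∈ K, mobius g K + mobius g (K.erase s) =
      mobius (fun T ↦ g (insert s T)) (K.erase s) := by
    intro s hs
    rw [← insert_erase hs, mobius_insert (notMem_erase s K), erase_insert (notMem_erase s K)]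
    ring
  rw [← nsmul_eq_mul, ← sum_const, ← sum_add_distrib, sum_congr rfl h]
  simp only [mobius, erase_sdiff_comm, ← sdiff_insert]
  rw [← sum_powerset_sum_eq_sum_sum_powerset_erase K (fun _ T ↦ (-1) ^ #(K \ T) * g T)]
  simp only [sum_const, nsmul_eq_mul, mul_left_comm]

end Mobius

local notation "𝒟" => mobius (fun J ↦ (alphaHat J : ℤ))

def gaps (p : ℕ) (L : List ℕ) : List ℕ :=
  List.zipWith (fun a b ↦ b - a) (p :: L) L

theorem alphaHat_eq_hatFac_gaps (X : Finset ℕ) :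
    alphaHat X = hatFac (gaps 1 (X.sort (· ≤ ·))) := rfl

theorem gaps_cons (p a : ℕ) (l : List ℕ) : gaps p (a :: l) = (a - p) :: gaps a l := rfl

@[simp]
theorem length_gaps (p : ℕ) (L : List ℕ) : (gaps p L).length = L.length := by
  simp [gaps]

theorem gaps_map_succ (p : ℕ) (L : List ℕ) : gaps (p + 1) (L.map (· + 1)) = gaps p L := by
  induction L generalizing p with
  | nil => rfl
  | cons a l ih => simp only [List.map_cons, gaps_cons, ih, Nat.add_sub_add_right]

theorem hatFac_cons (x : ℕ) (β : List ℕ) :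
    hatFac (x :: β) = (β.length + 2) ^ x * hatFac β := by
  simp only [hatFac, List.zipIdx_cons, List.zipIdx_succ, List.map_cons, List.map_map,
    List.prod_cons, List.length_cons]
  congr 2
  refine List.map_congr_left fun p _ ↦ ?_
  simp only [Function.comp_apply, Nat.add_sub_add_right]

theorem sort_image_succ (K : Finset ℕ) :
    (K.image (· + 1)).sort (· ≤ ·) = (K.sort (· ≤ ·)).map (· + 1) := by
  have := StrictMonoOn.map_finsetSort (s := K) (f := ⟨(· + 1), add_left_injective 1⟩)
    fun _ _ _ _ ↦ Nat.succ_lt_succ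
  rwa [map_eq_image, Function.Embedding.coeFn_mk, eq_comm] at this

theorem alphaHat_image_succ {K : Finset ℕ} (hK : 0 ∉ K) :
    alphaHat (K.image (· + 1)) = (K.card + 1) * alphaHat K := by
  rw [alphaHat_eq_hatFac_gaps, alphaHat_eq_hatFac_gaps, sort_image_succ, ← length_sort (· ≤ ·)]
  have h1 : ∀ a ∈ K.sort (· ≤ ·), 1 ≤ a := fun a ha ↦
    Nat.one_le_iff_ne_zero.mpr fun h ↦ hK (h ▸ (mem_sort _).mp ha)
  generalize K.sort (· ≤ ·) = L at h1
  cases L with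
  | nil => simp
  | cons a l =>
    have ha : 1 ≤ a := h1 a (List.mem_cons_self ..)
    rw [List.map_cons, gaps_cons, gaps_map_succ, gaps_cons, hatFac_cons, hatFac_cons,
      length_gaps, List.length_cons, Nat.add_sub_cancel, ← Nat.sub_add_cancel ha, pow_succ]
    simp only [Nat.add_sub_cancel]
    ring

theorem alphaHat_insert_two_image_succ {K : Finset ℕ} (hK : ∀ x ∈ K, 2 ≤ x) :
    alphaHat (insert 2 (K.image (· + 1))) = (K.card + 2) * alphaHat K := by
  have h2 : ∀ b ∈ K.image (· + 1), 2 ≤ b := by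
    simp only [mem_image, forall_exists_index, and_imp, forall_apply_eq_imp_iff₂]
    intro a ha; have := hK a ha; omega
  have h2' : 2 ∉ K.image (· + 1) := by
    simp only [mem_image, not_exists, not_and]
    intro a ha; have := hK a ha; omega
  rw [alphaHat_eq_hatFac_gaps, sort_insert _ h2 h2', sort_image_succ, gaps_cons, gaps_map_succ,
    hatFac_cons, length_gaps, length_sort, alphaHat_eq_hatFac_gaps]
  simp

theorem sum_Icc_succ_eq_add_sum_Icc {M : Type*} [AddCommMonoid M] {a n : ℕ} (h : a ≤ n + 1)
    (f : ℕ → M) :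
    ∑ x ∈ Icc a (n + 1), f x = f a + ∑ y ∈ Icc a n, f (y + 1) := by
  have hIcc : Icc a (n + 1) = insert a ((Icc a n).image (· + 1)) := by
    ext x
    simp only [mem_Icc, mem_insert, mem_image]
    constructor
    · intro hx
      by_cases hxa : x = a
      · exact Or.inl hxa
      · exact Or.inr ⟨x - 1, by omega, by omega⟩
    · rintro (rfl | ⟨y, hy, rfl⟩) <;> omega
  rw [hIcc, sum_insert (by simp), sum_image fun _ _ _ _ ↦ Nat.succ.inj]

theorem exists_erase_two_eq_image_succ {n : ℕ} {X : Finset ℕ} (hX : X ⊆ Icc 2 (n + 1)) :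
    ∃ Y ⊆ Icc 2 n, X.erase 2 = Y.image (· + 1) := by
  refine ⟨(Icc 2 n).filter (· + 1 ∈ X), filter_subset _ _, ?_⟩
  ext a
  simp only [mem_erase, mem_image, mem_filter, mem_Icc]
  constructor
  · rintro ⟨h2, ha⟩
    have := mem_Icc.mp (hX ha)
    exact ⟨a - 1, ⟨by omega, by rwa [Nat.sub_add_cancel (by omega)]⟩, by omega⟩
  · rintro ⟨b, ⟨hb, hbX⟩, rfl⟩
    exact ⟨by omega, hbX⟩

theorem sum_card_insert_mul {ι R : Type*} [DecidableEq ι] [CommSemiring R] {I Y : Finset ι}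
    (hY : Y ⊆ I) (f : Finset ι → R) :
    ∑ y ∈ I, (insert y Y).card * f (insert y Y) + Y.card * f Y =
      (Y.card + 1) * ∑ y ∈ I, f (insert y Y) := by
  have hout : ∑ y ∈ I \ Y, (insert y Y).card * f (insert y Y) =
      ∑ y ∈ I \ Y, (Y.card + 1) * f (insert y Y) :=
    sum_congr rfl fun y hy ↦ by rw [card_insert_of_notMem (mem_sdiff.mp hy).2, Nat.cast_succ]
  have hin : ∑ y ∈ Y, (insert y Y).card * f (insert y Y) = ∑ y ∈ Y, Y.card * f Y :=
    sum_congr rfl fun y hy ↦ by rw [insert_eq_of_mem hy]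
  have hin' : ∑ y ∈ Y, f (insert y Y) = ∑ y ∈ Y, f Y :=
    sum_congr rfl fun y hy ↦ by rw [insert_eq_of_mem hy]
  rw [← sum_sdiff hY, ← sum_sdiff hY (f := fun y ↦ f (insert y Y)), hout, hin, hin']
  simp only [sum_const, nsmul_eq_mul, ← mul_sum]
  ring

theorem alphaHat_insert_top {n : ℕ} (hn : 1 ≤ n) {X : Finset ℕ} (hX : X ⊆ Icc 2 n) :
    alphaHat (insert (n + 1) X) = 2 * alphaHat X + ∑ x ∈ Icc 2 n, alphaHat (insert x X) := by
  induction n, hn using Nat.le_induction generalizing X with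
  | base =>
    obtain rfl : X = ∅ := subset_empty.mp (by simpa using hX)
    simp [alphaHat_eq_hatFac_gaps, gaps, hatFac]
  | succ n hn ih =>
    obtain ⟨Y, hY, hXY⟩ := exists_erase_two_eq_image_succ hX
    have hY2 : ∀ y ∈ insert (n + 1) Y, 2 ≤ y := by
      intro y hy
      rcases mem_insert.mp hy with rfl | hy
      · omega
      · exact (mem_Icc.mp (hY hy)).1
    have hinsY : ∀ y ∈ Icc 2 n, ∀ z ∈ insert y Y, 2 ≤ z := by
      intro y hy z hz
      rcases mem_insert.mp hz with rfl | hz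
      · exact (mem_Icc.mp hy).1
      · exact (mem_Icc.mp (hY hz)).1
    have zero_notMem : ∀ {Z : Finset ℕ}, (∀ z ∈ Z, 2 ≤ z) → 0 ∉ Z :=
      fun hZ h ↦ by simpa using hZ 0 h
    have hcard : (insert (n + 1) Y).card = Y.card + 1 :=
      card_insert_of_notMem fun h ↦ by have := (mem_Icc.mp (hY h)).2; omega
    have hlift : ∀ y, insert (y + 1) (Y.image (· + 1)) = (insert y Y).image (· + 1) :=
      fun y ↦ (image_insert _ _ _).symm
    have htop := ih hY
    have hsum := sum_card_insert_mul hY alphaHat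
    simp only [Nat.cast_id] at hsum
    rw [sum_Icc_succ_eq_add_sum_Icc (by omega)]
    by_cases h2 : 2 ∈ X
    · rw [← insert_erase h2, hXY, insert_idem, insert_comm, hlift,
        alphaHat_insert_two_image_succ hY2, hcard,
        sum_congr rfl fun y hy ↦ by
          rw [insert_comm, hlift, alphaHat_insert_two_image_succ (hinsY y hy)],
        alphaHat_insert_two_image_succ fun y hy ↦ hY2 y (mem_insert_of_mem hy), htop]
      simp only [add_mul, sum_add_distrib, ← mul_sum] at hsum ⊢
      linarith
    · rw [← erase_eq_of_notMem h2, hXY, hlift, alphaHat_image_succ (zero_notMem hY2), hcard,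
        sum_congr rfl fun y hy ↦ by rw [hlift, alphaHat_image_succ (zero_notMem (hinsY y hy))],
        alphaHat_insert_two_image_succ fun y hy ↦ hY2 y (mem_insert_of_mem hy), htop,
        alphaHat_image_succ (zero_notMem fun y hy ↦ hY2 y (mem_insert_of_mem hy))]
      simp only [add_mul, sum_add_distrib, ← mul_sum] at hsum ⊢
      linarith

theorem mobius_alphaHat_insert_two_image_succ {K : Finset ℕ} (hK : ∀ x ∈ K, 2 ≤ x) :
    𝒟 (insert 2 (K.image (· + 1))) = 𝒟 K := by
  have h2 : 2 ∉ K.image (· + 1) := by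
    simp only [mem_image, not_exists, not_and]
    exact fun x hx ↦ by have := hK x hx; omega
  have hsub : ∀ J ⊆ K, ∀ x ∈ J, 2 ≤ x := fun J hJ x hx ↦ hK x (hJ hx)
  rw [mobius_insert h2, mobius_image (add_left_injective 1).injOn,
    mobius_image (add_left_injective 1).injOn, ← mobius_sub]
  refine mobius_congr fun J hJ ↦ ?_
  rw [alphaHat_insert_two_image_succ (hsub J hJ),
    alphaHat_image_succ fun h ↦ by simpa using hsub J hJ 0 h]
  push_cast
  ring

theorem mobius_alphaHat_image_succ {K : Finset ℕ} (hK : 0 ∉ K) :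
    𝒟 (K.image (· + 1)) = (K.card + 1) * 𝒟 K + ∑ s ∈ K, 𝒟 (K.erase s) := by
  rw [mobius_image (add_left_injective 1).injOn,
    mobius_congr (g := fun J ↦ J.card * (alphaHat J : ℤ) + alphaHat J) fun J hJ ↦ by
      rw [alphaHat_image_succ fun h ↦ hK (hJ h)]; push_cast; ring,
    mobius_add, mobius_card_mul]
  ring

theorem mobius_alphaHat_insert_top {n : ℕ} (hn : 1 ≤ n) {P : Finset ℕ} (hP : P ⊆ Icc 2 n) :
    𝒟 (insert (n + 1) P) = (n - P.card) * 𝒟 P + ∑ m ∈ Icc 2 n \ P, 𝒟 (insert m P) := by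
  have htop : n + 1 ∉ P := fun h ↦ by have := (mem_Icc.mp (hP h)).2; omega
  have hcard : ((Icc 2 n \ P).card : ℤ) = n - 1 - P.card := by
    rw [card_sdiff_of_subset hP, Nat.card_Icc, Nat.cast_sub (by simpa using card_le_card hP),
      Nat.cast_sub (by omega)]
    push_cast
    ring
  have hout : ∀ m ∈ Icc 2 n \ P, mobius (fun T ↦ (alphaHat (insert m T) : ℤ)) P =
      𝒟 (insert m P) + 𝒟 P :=
    fun m hm ↦ by rw [mobius_insert (mem_sdiff.mp hm).2]; ring
  have hin : ∀ m ∈ P, mobius (fun T ↦ (alphaHat (insert m T) : ℤ)) P = 0 :=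
    fun m hm ↦ mobius_comp_insert_of_mem hm fun J ↦ (alphaHat J : ℤ)
  rw [mobius_insert htop,
    mobius_congr (g := fun T ↦ 2 * (alphaHat T : ℤ) + ∑ m ∈ Icc 2 n, (alphaHat (insert m T) : ℤ))
      fun T hT ↦ by rw [alphaHat_insert_top hn (hT.trans hP)]; push_cast; ring,
    mobius_add, mobius_const_mul, mobius_sum, ← sum_sdiff hP, sum_congr rfl hin, sum_const_zero,
    add_zero, sum_congr rfl hout, sum_add_distrib, sum_const, nsmul_eq_mul, hcard]
  ring

def mirrorCompl (n : ℕ) (K : Finset ℕ) : Finset ℕ :=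
  (Icc 2 (n + 1) \ K).image (n + 3 - ·)

theorem injOn_sub_Icc (n : ℕ) : Set.InjOn (n + 3 - ·) ↑(Icc 2 (n + 1)) := fun a ha b hb h ↦ by
  simp only [coe_Icc, Set.mem_Icc] at ha hb h
  omega

theorem mem_mirrorCompl {n a : ℕ} {K : Finset ℕ} :
    a ∈ mirrorCompl n K ↔ a ∈ Icc 2 (n + 1) ∧ n + 3 - a ∉ K := by
  simp only [mirrorCompl, mem_image, mem_sdiff, mem_Icc]
  constructor
  · rintro ⟨j, ⟨hj, hjK⟩, rfl⟩
    exact ⟨by omega, by rwa [Nat.sub_sub_self (by omega)]⟩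
  · rintro ⟨ha, haK⟩
    exact ⟨n + 3 - a, ⟨by omega, haK⟩, by omega⟩

theorem mem_image_succ {a : ℕ} {K : Finset ℕ} : a ∈ K.image (· + 1) ↔ 1 ≤ a ∧ a - 1 ∈ K := by
  simp only [mem_image]
  constructor
  · rintro ⟨b, hb, rfl⟩
    simpa using hb
  · rintro ⟨ha, haK⟩
    exact ⟨a - 1, haK, by omega⟩

theorem mirrorCompl_succ_insert_two_image_succ (n : ℕ) (K : Finset ℕ) :
    mirrorCompl (n + 1) (insert 2 (K.image (· + 1))) = mirrorCompl n K := by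
  ext a
  simp only [mem_mirrorCompl, mem_insert, mem_image_succ, mem_Icc]
  grind

theorem mirrorCompl_succ_image_succ (n : ℕ) {K : Finset ℕ} (hK : 1 ∉ K) :
    mirrorCompl (n + 1) (K.image (· + 1)) = insert (n + 2) (mirrorCompl n K) := by
  ext a
  simp only [mem_mirrorCompl, mem_insert, mem_image_succ, mem_Icc]
  grind

theorem insert_mirrorCompl {n s : ℕ} (hs : s ∈ Icc 2 (n + 1)) (K : Finset ℕ) :
    insert (n + 3 - s) (mirrorCompl n K) = mirrorCompl n (K.erase s) := by
  ext a
  simp only [mem_mirrorCompl, mem_insert, mem_erase, mem_Icc] at hs ⊢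
  grind

theorem sdiff_mirrorCompl {n : ℕ} {K : Finset ℕ} (hK : K ⊆ Icc 2 (n + 1)) :
    Icc 2 (n + 1) \ mirrorCompl n K = K.image (n + 3 - ·) := by
  ext a
  simp only [mem_sdiff, mem_mirrorCompl, mem_image]
  grind

theorem card_mirrorCompl {n : ℕ} {K : Finset ℕ} (hK : K ⊆ Icc 2 (n + 1)) :
    (mirrorCompl n K).card = n - K.card := by
  rw [mirrorCompl, card_image_of_injOn ((injOn_sub_Icc n).mono (coe_subset.mpr sdiff_subset)),
    card_sdiff_of_subset hK, Nat.card_Icc]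
  omega

theorem mirrorCompl_subset (n : ℕ) (K : Finset ℕ) : mirrorCompl n K ⊆ Icc 2 (n + 1) :=
  fun _ ha ↦ (mem_mirrorCompl.mp ha).1

theorem mobius_alphaHat_mirrorCompl_succ_image_succ {n : ℕ}
    (ih : ∀ K ⊆ Icc 2 (n + 1), 𝒟 (mirrorCompl n K) = 𝒟 K)
    {K : Finset ℕ} (hK : K ⊆ Icc 2 (n + 1)) :
    𝒟 (mirrorCompl (n + 1) (K.image (· + 1))) = 𝒟 (K.image (· + 1)) := by
  have h0 : 0 ∉ K := fun h ↦ by simpa using hK h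
  have h1 : 1 ∉ K := fun h ↦ by simpa using hK h
  have hcard : ((n + 1 : ℕ) : ℤ) - (n - K.card : ℕ) = K.card + 1 := by
    have : K.card ≤ n := by simpa using card_le_card hK
    push_cast [this]; ring
  rw [mirrorCompl_succ_image_succ n h1,
    mobius_alphaHat_insert_top (by omega) (mirrorCompl_subset n K), mobius_alphaHat_image_succ h0,
    ih K hK, card_mirrorCompl hK, sdiff_mirrorCompl hK,
    sum_image ((injOn_sub_Icc n).mono (coe_subset.mpr hK)), hcard]
  congr 1
  refine sum_congr rfl fun s hs ↦ ?_
  rw [insert_mirrorCompl (hK hs), ih _ ((erase_subset s K).trans hK)]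

theorem mobius_alphaHat_mirrorCompl {n : ℕ} {K : Finset ℕ} (hK : K ⊆ Icc 2 (n + 1)) :
    𝒟 (mirrorCompl n K) = 𝒟 K := by
  induction n generalizing K with
  | zero =>
    obtain rfl : K = ∅ := subset_empty.mp (by simpa using hK)
    simp [mirrorCompl]
  | succ n ih =>
    obtain ⟨K', hK', hKK'⟩ := exists_erase_two_eq_image_succ hK
    by_cases h2 : 2 ∈ K
    · rw [← insert_erase h2, hKK', mirrorCompl_succ_insert_two_image_succ,
        mobius_alphaHat_insert_two_image_succ fun x hx ↦ (mem_Icc.mp (hK' hx)).1, ih hK']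
    · rw [← erase_eq_of_notMem h2, hKK']
      exact mobius_alphaHat_mirrorCompl_succ_image_succ (fun K hK ↦ ih hK) hK'

/-- Combinatorial sum identity coming from mirrorpalindromicity, with `τ(i) = n+3-i`. -/
theorem sum_identity_tau (n : ℕ) (K : Finset ℕ) (hK : K ⊆ Finset.Icc 2 (n+1)) :
    ∑ J ∈ (Finset.Icc 2 (n+1) \ K).powerset,
        (-1 : ℤ) ^ (n - (K ∪ J).card) * alphaHat (J.image (fun j => n + 3 - j)) =
      ∑ J ∈ K.powerset, (-1 : ℤ) ^ ((K \ J).card) * alphaHat J := by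
  have key := mobius_alphaHat_mirrorCompl hK
  rw [mirrorCompl, mobius_image ((injOn_sub_Icc n).mono (coe_subset.mpr sdiff_subset))] at key
  refine Eq.trans (sum_congr rfl fun J hJ ↦ ?_) key
  have hJ : J ⊆ Icc 2 (n + 1) \ K := mem_powerset.mp hJ
  have hKJ : Disjoint K J := disjoint_of_subset_right hJ disjoint_sdiff
  rw [card_union_of_disjoint hKJ, card_sdiff_of_subset hJ, card_sdiff_of_subset hK, Nat.card_Icc,
    show n + 1 + 1 - 2 = n by omega, Nat.sub_sub]
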